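/- Fix c > 0 and σ ∈ {+1, −1}. For every complex-valued Schwartz function φ on ℝ³ × ℝ, the function r ↦ φ(r, σ‖r‖/c)/‖r‖ is integrable on ℝ³, and there exists a constant C > 0 (independent of φ) such that |∫_{ℝ³} φ(r, σ‖r‖/c)/‖r‖ d³r| ≤ C · sup_{(r,t) ∈ ℝ³×ℝ} (1 + ‖(r,t)‖)³ |φ(r,t)|. In particular, the map φ ↦ −(1/(4π)) ∫_{ℝ³} φ(r, σ‖r‖/c)/‖r‖ d³r is a well-defined continuous linear functional on Schwartz space, i.e., E_{□±} = −δ(t ∓ r/c)/(4πr) are tempered distributions on ℝ³ × ℝ. -/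

import Mathlib

/-!
On the graph `t = τ(r)` (the cone `t = ±‖r‖/c` for the spherical waves) one has `‖(r, t)‖ ≥ ‖r‖`, so with `M = sup (1 + ‖X‖)ᵏ ‖φ X‖` the integrand
is dominated by `M (‖r‖ (1 + ‖r‖)ᵏ)⁻¹`. In polar coordinates on a space of dimension `n ≥ 2`,
with `k ≥ n`, this majorant has radial density `yⁿ⁻² / (1 + y)ᵏ ≤ (1 + y)⁻²`, which is
integrable on `(0, ∞)`.
-/

open MeasureTheory Set Module
open scoped SchwartzMap

lemma pow_div_one_add_pow_le_inv_one_add_sq {y : ℝ} (hy : 0 ≤ y) {m k : ℕ} (hmk : m + 2 ≤ k) :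
    y ^ m / (1 + y) ^ k ≤ ((1 + y) ^ 2)⁻¹ := by
  have h1 : 1 ≤ 1 + y := by linarith
  calc y ^ m / (1 + y) ^ k ≤ (1 + y) ^ m / (1 + y) ^ k := by gcongr; linarith
    _ = ((1 + y) ^ (k - m))⁻¹ := by
      rw [pow_sub₀ _ (by positivity) (by omega)]; field_simp
    _ ≤ ((1 + y) ^ 2)⁻¹ := by gcongr; omega

section

variable {E : Type*} [NormedAddCommGroup E] [NormedSpace ℝ E] [FiniteDimensional ℝ E]
  [MeasurableSpace E] [BorelSpace E] (μ : Measure E) [μ.IsAddHaarMeasure]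

theorem integrable_inv_norm_mul_one_add_norm_pow (hE : 2 ≤ finrank ℝ E) {k : ℕ}
    (hk : finrank ℝ E ≤ k) : Integrable (fun x : E => (‖x‖ * (1 + ‖x‖) ^ k)⁻¹) μ := by
  have : Nontrivial E := Module.nontrivial_of_finrank_pos (R := ℝ) (by omega)
  rw [integrable_fun_norm_addHaar μ (f := fun y => (y * (1 + y) ^ k)⁻¹)]
  refine ((integrable_one_add_norm (E := ℝ) (μ := volume) (r := 2) (by simp)).integrableOn).mono'
    (by fun_prop) ((ae_restrict_iff' measurableSet_Ioi).mpr (.of_forall fun y (hy : 0 < y) => ?_))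
  obtain ⟨m, hm⟩ : ∃ m, finrank ℝ E = m + 2 := ⟨_, (Nat.sub_add_cancel hE).symm⟩
  calc ‖y ^ (finrank ℝ E - 1) • (y * (1 + y) ^ k)⁻¹‖ = y ^ m / (1 + y) ^ k := by
        rw [hm, Real.norm_of_nonneg (by positivity), smul_eq_mul, show m + 2 - 1 = m + 1 by omega]
        field_simp
        ring
    _ ≤ ((1 + y) ^ 2)⁻¹ := pow_div_one_add_pow_le_inv_one_add_sq hy.le (by omega)
    _ = (1 + ‖y‖) ^ (-2 : ℝ) := by
        rw [Real.norm_of_nonneg hy.le, Real.rpow_neg (by positivity)]; norm_cast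

end

namespace SchwartzMap

variable {E F G : Type*} [NormedAddCommGroup E] [NormedSpace ℝ E] [NormedAddCommGroup F]
  [NormedSpace ℝ F] [NormedAddCommGroup G] [NormedSpace ℝ G]

theorem bddAbove_range_one_add_norm_pow_mul_norm (φ : 𝓢(E, F)) (k : ℕ) :
    BddAbove (range fun x => (1 + ‖x‖) ^ k * ‖φ x‖) := by
  refine ⟨2 ^ k * ((Finset.Iic (k, 0)).sup fun m => SchwartzMap.seminorm ℝ m.1 m.2) φ, ?_⟩
  rintro _ ⟨x, rfl⟩
  simpa using one_add_le_sup_seminorm_apply (𝕜 := ℝ) (m := (k, 0)) le_rfl le_rfl φ x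

theorem norm_le_iSup_div_one_add_norm_pow (φ : 𝓢(E, F)) (k : ℕ) (x : E) :
    ‖φ x‖ ≤ (⨆ y, (1 + ‖y‖) ^ k * ‖φ y‖) / (1 + ‖x‖) ^ k := by
  rw [le_div_iff₀' (by positivity)]
  exact le_ciSup (φ.bddAbove_range_one_add_norm_pow_mul_norm k) x

theorem norm_apply_graph_div_norm_le (φ : 𝓢(E × G, ℂ)) (τ : E → G) (k : ℕ) (r : E) :
    ‖φ (r, τ r) / (‖r‖ : ℂ)‖ ≤ (⨆ X, (1 + ‖X‖) ^ k * ‖φ X‖) * (‖r‖ * (1 + ‖r‖) ^ k)⁻¹ := by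
  have hM : 0 ≤ ⨆ X, (1 + ‖X‖) ^ k * ‖φ X‖ := Real.iSup_nonneg fun X => by positivity
  calc ‖φ (r, τ r) / (‖r‖ : ℂ)‖ = ‖φ (r, τ r)‖ / ‖r‖ := by simp
    _ ≤ (⨆ X, (1 + ‖X‖) ^ k * ‖φ X‖) / (1 + ‖(r, τ r)‖) ^ k / ‖r‖ := by
        gcongr; exact φ.norm_le_iSup_div_one_add_norm_pow k _
    _ ≤ (⨆ X, (1 + ‖X‖) ^ k * ‖φ X‖) / (1 + ‖r‖) ^ k / ‖r‖ := by
        gcongr; exact norm_fst_le (r, τ r)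
    _ = _ := by ring

variable [FiniteDimensional ℝ E] [MeasurableSpace E] [BorelSpace E] (μ : Measure E)
  [μ.IsAddHaarMeasure]

theorem integrable_apply_graph_div_norm (hE : 2 ≤ finrank ℝ E) (φ : 𝓢(E × G, ℂ))
    {τ : E → G} (hτ : Continuous τ) :
    Integrable (fun r => φ (r, τ r) / (‖r‖ : ℂ)) μ :=
  ((integrable_inv_norm_mul_one_add_norm_pow μ hE le_rfl).const_mul _).mono'
    ((φ.continuous.comp (by fun_prop)).measurable.div (by fun_prop)).aestronglyMeasurable
    (.of_forall (φ.norm_apply_graph_div_norm_le τ _))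

theorem norm_integral_apply_graph_div_norm_le (hE : 2 ≤ finrank ℝ E)
    (φ : 𝓢(E × G, ℂ)) (τ : E → G) :
    ‖∫ r, φ (r, τ r) / (‖r‖ : ℂ) ∂μ‖ ≤
      (∫ r, (‖r‖ * (1 + ‖r‖) ^ finrank ℝ E)⁻¹ ∂μ) *
        ⨆ X, (1 + ‖X‖) ^ finrank ℝ E * ‖φ X‖ := by
  rw [mul_comm, ← integral_const_mul]
  exact norm_integral_le_of_norm_le
    ((integrable_inv_norm_mul_one_add_norm_pow μ hE le_rfl).const_mul _)
    (.of_forall (φ.norm_apply_graph_div_norm_le τ _))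

end SchwartzMap

theorem spherical_wave_is_tempered_distribution_general
    (c σ : ℝ) :
    (∀ φ : SchwartzMap (EuclideanSpace ℝ (Fin 3) × ℝ) ℂ,
      Integrable (fun r : EuclideanSpace ℝ (Fin 3) => φ (r, σ * ‖r‖ / c) / (‖r‖ : ℂ))) ∧
    ∃ C > (0 : ℝ), ∀ φ : SchwartzMap (EuclideanSpace ℝ (Fin 3) × ℝ) ℂ,
      ‖∫ r : EuclideanSpace ℝ (Fin 3), φ (r, σ * ‖r‖ / c) / (‖r‖ : ℂ)‖ ≤
        C * ⨆ X : EuclideanSpace ℝ (Fin 3) × ℝ, (1 + ‖X‖) ^ 3 * ‖φ X‖ := by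
  have hdim : finrank ℝ (EuclideanSpace ℝ (Fin 3)) = 3 := finrank_euclideanSpace_fin
  refine ⟨fun φ => φ.integrable_apply_graph_div_norm volume (by omega) (by fun_prop),
    (∫ r : EuclideanSpace ℝ (Fin 3), (‖r‖ * (1 + ‖r‖) ^ 3)⁻¹) + 1, by positivity, fun φ => ?_⟩
  have hM : 0 ≤ ⨆ X : EuclideanSpace ℝ (Fin 3) × ℝ, (1 + ‖X‖) ^ 3 * ‖φ X‖ :=
    Real.iSup_nonneg fun X => by positivity
  have h := φ.norm_integral_apply_graph_div_norm_le volume (by omega) (fun r => σ * ‖r‖ / c)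
  rw [hdim] at h
  exact h.trans (by gcongr; linarith)

/-- Fix `c > 0` and `σ ∈ {+1, −1}`. For every Schwartz function `φ` on `ℝ³ × ℝ`,
the function `r ↦ φ(r, σ‖r‖/c)/‖r‖` is integrable on ℝ³, and there is a constant
`C > 0` independent of `φ` with
`‖∫_{ℝ³} φ(r, σ‖r‖/c)/‖r‖ d³r‖ ≤ C ⬝ sup_{(r,t)} (1 + ‖(r,t)‖)³ ‖φ(r,t)‖`.
Hence `φ ↦ −(1/(4π)) ∫ φ(r, σ‖r‖/c)/‖r‖ d³r` is a continuous linear functional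
on Schwartz space, i.e. `E_{□±} = −δ(t ∓ r/c)/(4πr)` are tempered distributions. -/
theorem spherical_wave_is_tempered_distribution
    (c σ : ℝ) (hc : 0 < c) (hσ : σ = 1 ∨ σ = -1) :
    (∀ φ : SchwartzMap (EuclideanSpace ℝ (Fin 3) × ℝ) ℂ,
      Integrable (fun r : EuclideanSpace ℝ (Fin 3) => φ (r, σ * ‖r‖ / c) / (‖r‖ : ℂ))) ∧
    ∃ C > (0 : ℝ), ∀ φ : SchwartzMap (EuclideanSpace ℝ (Fin 3) × ℝ) ℂ,
      ‖∫ r : EuclideanSpace ℝ (Fin 3), φ (r, σ * ‖r‖ / c) / (‖r‖ : ℂ)‖ ≤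
        C * ⨆ X : EuclideanSpace ℝ (Fin 3) × ℝ, (1 + ‖X‖) ^ 3 * ‖φ X‖ :=
  spherical_wave_is_tempered_distribution_general c σ
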